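/- arXiv:1409.1107 — 5 statements merged into one kernel-verified Lean document; each statement's English description precedes it below -/
import Mathlib

section
/- Define S_{G,E} = {(α, g, β) ∈ E* × G × E* : d(α) = g·d(β)} ∪ {0} with multiplication: (α,g,β)(γ,h,δ) = (α·(g·ε), φ(g,ε)h, δ) if γ = βε; = (α, g·φ(h⁻¹,ε)⁻¹, δ·(h⁻¹·ε)) if β = γε; and 0 otherwise; with involution (α,g,β)* = (β, g⁻¹, α). Then for every nonzero element y = (α,g,β), y·y*·y = y. -/
/-- A self-similar structure on the finite path space of a directed graph:
`P` is the set of finite paths `E*`, `V` the vertices, and a group `G` acts on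
paths by length-preserving bijections together with a one-cocycle `coc` (φ),
satisfying the relations (2.5) of Exel–Pardo.  `comp α β` is the concatenation
`αβ` (meaningful when `src α = rng β`), `vert x` is the length-zero path at the
vertex `x`, `vact` is the induced action on vertices. -/
structure SSG (G V P : Type*) [Group G] where
  len : P → ℕ
  src : P → V
  rng : P → V
  comp : P → P → P
  vert : V → P
  vact : G → V → V
  act : G → P → P
  coc : G → P → G
  len_vert : ∀ x, len (vert x) = 0
  src_vert : ∀ x, src (vert x) = x
  rng_vert : ∀ x, rng (vert x) = x
  eq_vert_of_len_zero : ∀ p, len p = 0 → p = vert (src p)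
  len_comp : ∀ α β, src α = rng β → len (comp α β) = len α + len β
  src_comp : ∀ α β, src α = rng β → src (comp α β) = src β
  rng_comp : ∀ α β, src α = rng β → rng (comp α β) = rng α
  comp_vert_right : ∀ α, comp α (vert (src α)) = α
  comp_vert_left : ∀ β, comp (vert (rng β)) β = β
  comp_assoc : ∀ α β γ, src α = rng β → src β = rng γ →
    comp (comp α β) γ = comp α (comp β γ)
  comp_inj : ∀ α β α' β', src α = rng β → src α' = rng β' → len α = len α' →
    comp α β = comp α' β' → α = α' ∧ β = β'
  decomp : ∀ p, 1 ≤ len p → ∃ e q, len e = 1 ∧ src e = rng q ∧ p = comp e q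
  act_one : ∀ p, act 1 p = p
  act_mul : ∀ g h p, act (g * h) p = act g (act h p)
  vact_one : ∀ x, vact 1 x = x
  vact_mul : ∀ g h x, vact (g * h) x = vact g (vact h x)
  len_act : ∀ g p, len (act g p) = len p
  src_act : ∀ g p, src (act g p) = vact g (src p)
  rng_act : ∀ g p, rng (act g p) = vact g (rng p)
  act_vert : ∀ g x, act g (vert x) = vert (vact g x)
  coc_vert : ∀ g x, coc g (vert x) = g
  coc_mul : ∀ g h p, coc (g * h) p = coc g (act h p) * coc h p
  act_comp : ∀ g α β, src α = rng β →
    act g (comp α β) = comp (act g α) (act (coc g α) β)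
  coc_comp : ∀ g α β, src α = rng β → coc g (comp α β) = coc (coc g α) β
  vact_coc : ∀ g p x, vact (coc g p) x = vact g x

namespace SSG

variable {G V P : Type*} [Group G]

/-- A path is strongly fixed by `g` if `g` fixes it and the cocycle is trivial on it. -/
def StronglyFixed (S : SSG G V P) (g : G) (p : P) : Prop :=
  S.act g p = p ∧ S.coc g p = 1

/-- Pseudo freeness: no nontrivial group element strongly fixes an edge. -/
def PseudoFree (S : SSG G V P) : Prop :=
  ∀ (g : G) (e : P), S.len e = 1 → S.act g e = e → S.coc g e = 1 → g = 1

end SSG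
namespace SSG

variable {G V P : Type*} [Group G]

open scoped Classical in
/-- Multiplication of the inverse semigroup `S_{G,E}`; `none` plays the role of `0`. -/
noncomputable def smul (S : SSG G V P) :
    Option (P × G × P) → Option (P × G × P) → Option (P × G × P)
  | some (α, g, β), some (γ, h, δ) =>
    if h1 : ∃ ε, S.src β = S.rng ε ∧ γ = S.comp β ε then
      some (S.comp α (S.act g h1.choose), S.coc g h1.choose * h, δ)
    else if h2 : ∃ ε, S.src γ = S.rng ε ∧ β = S.comp γ ε then
      some (α, g * (S.coc h⁻¹ h2.choose)⁻¹, S.comp δ (S.act h⁻¹ h2.choose))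
    else none
  | _, _ => none

/-- The involution of `S_{G,E}`. -/
def sstar (_S : SSG G V P) : Option (P × G × P) → Option (P × G × P)
  | some (α, g, β) => some (β, g⁻¹, α)
  | none => none

/-- Membership in `S_{G,E}`: the defining condition `d α = g • d β`. -/
def Mem (S : SSG G V P) : Option (P × G × P) → Prop
  | some (α, g, β) => S.src α = S.vact g (S.src β)
  | none => True

end SSG

namespace SSG

variable {G V P : Type*} [Group G] (S : SSG G V P)

theorem eq_vert_of_comp_eq_self {β ε : P} (hε : S.src β = S.rng ε) (h : β = S.comp β ε) :
    ε = S.vert (S.src β) :=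
  (S.comp_inj β ε β _ hε (S.rng_vert _).symm rfl (by rw [← h, S.comp_vert_right])).2

/-- The extension `ε` chosen in the definition of `smul` is forced to be the vertex `d β`. -/
theorem smul_some_of_eq {α β δ : P} {g : G} (h : G) (hα : S.src α = S.vact g (S.src β)) :
    S.smul (some (α, g, β)) (some (β, h, δ)) = some (α, g * h, δ) := by
  have hex : ∃ ε, S.src β = S.rng ε ∧ β = S.comp β ε :=
    ⟨S.vert (S.src β), (S.rng_vert _).symm, (S.comp_vert_right β).symm⟩
  obtain ⟨hsrc, hcomp⟩ := hex.choose_spec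
  rw [smul, dif_pos hex, S.eq_vert_of_comp_eq_self hsrc hcomp, S.act_vert, ← hα,
    S.comp_vert_right, S.coc_vert]

end SSG

/-- In `S_{G,E}` (with `0 = none` and the multiplication and involution of
Definition 4.1), every nonzero element `y = (α, g, β)` satisfies `y·y*·y = y`. -/
theorem stmt5 {G V P : Type*} [Group G] (S : SSG G V P) (α β : P) (g : G)
    (hmem : S.src α = S.vact g (S.src β)) :
    S.smul (S.smul (some (α, g, β)) (S.sstar (some (α, g, β)))) (some (α, g, β))
      = some (α, g, β) := by
  have hproj : S.smul (some (α, g, β)) (S.sstar (some (α, g, β))) = some (α, 1, α) := by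
    rw [SSG.sstar, S.smul_some_of_eq g⁻¹ hmem, mul_inv_cancel]
  rw [hproj, S.smul_some_of_eq g (S.vact_one _).symm, one_mul]
end

section
/- The inverse semigroup S_{G,E} is E*-unitary (i.e., every element dominating a nonzero idempotent is itself idempotent) if and only if the triple (G, E, φ) is pseudo free. -/
/-!
If `g` strongly fixes an edge `e`, then `(r(e), g, r(e))` dominates the nonzero idempotent
`(e, 1, e)`; being idempotent forces `g² = g`, i.e. `g = 1`. Conversely, the nonzero idempotents
of `S_{G,E}` are the elements `(γ, 1, γ)`, and if `(α, g, β)` dominates one of them with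
`γ = βε`, cancelling in `α (g·ε) = β ε` shows `α = β` and that `g` strongly fixes the path `ε`.
Pseudo freeness propagates from edges to all finite paths by peeling off the first edge,
so `g = 1`.
-/

namespace SSG

variable {G V P : Type*} [Group G] (S : SSG G V P)

lemma coc_one (p : P) : S.coc 1 p = 1 := by
  have h := S.coc_mul 1 1 p
  rw [one_mul, S.act_one] at h
  exact left_eq_mul.mp h

lemma vact_eq_of_coc_eq_one {g : G} {p : P} (hc : S.coc g p = 1) (x : V) : S.vact g x = x := by
  rw [← S.vact_coc g p x, hc, S.vact_one]

lemma comp_left_cancel {α ε ε' : P} (hε : S.src α = S.rng ε) (hε' : S.src α = S.rng ε')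
    (h : S.comp α ε = S.comp α ε') : ε = ε' :=
  (S.comp_inj α ε α ε' hε hε' rfl h).2

section LengthZero

variable {S}

lemma eq_vert_rng_of_len_eq_zero {p : P} (h : S.len p = 0) : p = S.vert (S.rng p) := by
  have hp := S.eq_vert_of_len_zero p h
  rw [hp, S.rng_vert]

lemma coc_of_len_eq_zero (g : G) {p : P} (h : S.len p = 0) : S.coc g p = g := by
  rw [eq_vert_rng_of_len_eq_zero h, S.coc_vert]

lemma comp_of_len_eq_zero {α p : P} (hs : S.src α = S.rng p) (h : S.len p = 0) :
    S.comp α p = α := by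
  rw [eq_vert_rng_of_len_eq_zero h, ← hs, S.comp_vert_right]

lemma len_eq_zero_of_comp_eq_self {α p : P} (hs : S.src α = S.rng p) (h : S.comp α p = α) :
    S.len p = 0 := by
  have hl := S.len_comp α p hs
  rw [h] at hl
  omega

end LengthZero

lemma smul_of_eq_comp {α β γ δ : P} {g h : G} {ε : P} (hε : S.src β = S.rng ε)
    (hγ : γ = S.comp β ε) :
    S.smul (some (α, g, β)) (some (γ, h, δ)) =
      some (S.comp α (S.act g ε), S.coc g ε * h, δ) := by
  have h1 : ∃ ε, S.src β = S.rng ε ∧ γ = S.comp β ε := ⟨ε, hε, hγ⟩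
  have hchoose : h1.choose = ε := by
    obtain ⟨hc1, hc2⟩ := h1.choose_spec
    exact S.comp_left_cancel hc1 hε (hc2.symm.trans hγ)
  simp only [SSG.smul, dif_pos h1, hchoose]

lemma smul_eq_some_cases {α β γ δ : P} {g h : G} {c : P × G × P}
    (hc : S.smul (some (α, g, β)) (some (γ, h, δ)) = some c) :
    (∃ ε, S.src β = S.rng ε ∧ γ = S.comp β ε ∧
        c = (S.comp α (S.act g ε), S.coc g ε * h, δ)) ∨
      (∃ ε, S.src γ = S.rng ε ∧ β = S.comp γ ε ∧
        c = (α, g * (S.coc h⁻¹ ε)⁻¹, S.comp δ (S.act h⁻¹ ε))) := by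
  dsimp only [smul] at hc
  split_ifs at hc with h1 h2
  · exact Or.inl ⟨h1.choose, h1.choose_spec.1, h1.choose_spec.2, (Option.some.inj hc).symm⟩
  · exact Or.inr ⟨h2.choose, h2.choose_spec.1, h2.choose_spec.2, (Option.some.inj hc).symm⟩

lemma smul_diag (γ : P) :
    S.smul (some (γ, (1 : G), γ)) (some (γ, (1 : G), γ)) = some (γ, (1 : G), γ) := by
  rw [S.smul_of_eq_comp (S.rng_vert _).symm (S.comp_vert_right γ).symm, S.act_one,
    S.comp_vert_right, S.coc_vert, one_mul]

lemma smul_vert_of_rng_eq {x : V} {g h : G} (hx : S.vact g x = x) {γ δ : P}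
    (hγ : S.rng γ = x) :
    S.smul (some (S.vert x, g, S.vert x)) (some (γ, h, δ)) =
      some (S.act g γ, S.coc g γ * h, δ) := by
  have hγ' : γ = S.comp (S.vert x) γ := by rw [← hγ, S.comp_vert_left]
  rw [S.smul_of_eq_comp (by rw [S.src_vert, hγ]) hγ']
  nth_rw 1 [← hx, ← hγ, ← S.rng_act g γ, S.comp_vert_left]

lemma mem_diag (γ : P) : S.Mem (some (γ, (1 : G), γ)) := by
  show S.src γ = S.vact 1 (S.src γ)
  rw [S.vact_one]

lemma mem_vert {x : V} {g : G} (hx : S.vact g x = x) : S.Mem (some (S.vert x, g, S.vert x)) := by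
  show S.src (S.vert x) = S.vact g (S.src (S.vert x))
  rw [S.src_vert, hx]

variable {S}

lemma eq_diag_of_smul_self {e : Option (P × G × P)} (hMe : S.Mem e) (hne : e ≠ none)
    (hee : S.smul e e = e) : ∃ γ, e = some (γ, (1 : G), γ) := by
  rcases e with _ | ⟨γ, h, δ⟩
  · exact absurd rfl hne
  have hMe : S.src γ = S.vact h (S.src δ) := hMe
  rcases S.smul_eq_some_cases hee with ⟨ε, hε, hγ, heq⟩ | ⟨ε, hε, hδ, heq⟩
  · obtain ⟨hcomp, hcoc, -⟩ := by simpa only [Prod.mk.injEq] using heq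
    have hs : S.src γ = S.rng (S.act h ε) := by rw [S.rng_act, ← hε, hMe]
    have hε0 : S.len ε = 0 := by
      rw [← S.len_act h ε]; exact len_eq_zero_of_comp_eq_self hs hcomp.symm
    rw [coc_of_len_eq_zero h hε0, left_eq_mul] at hcoc
    rw [comp_of_len_eq_zero hε hε0] at hγ
    exact ⟨γ, by rw [hcoc, ← hγ]⟩
  · obtain ⟨-, hcoc, hcomp⟩ := by simpa only [Prod.mk.injEq] using heq
    have hs : S.src δ = S.rng (S.act h⁻¹ ε) := by
      rw [S.rng_act, ← hε, hMe, ← S.vact_mul, inv_mul_cancel, S.vact_one]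
    have hε0 : S.len ε = 0 := by
      rw [← S.len_act h⁻¹ ε]; exact len_eq_zero_of_comp_eq_self hs hcomp.symm
    rw [coc_of_len_eq_zero h⁻¹ hε0, inv_inv, left_eq_mul] at hcoc
    rw [comp_of_len_eq_zero hε hε0] at hδ
    exact ⟨γ, by rw [hcoc, hδ]⟩

lemma PseudoFree.eq_one_of_stronglyFixed (hPF : S.PseudoFree) {g : G} {p : P}
    (hp : S.StronglyFixed g p) : g = 1 := by
  induction hl : S.len p generalizing g p with
  | zero => rw [← coc_of_len_eq_zero g hl]; exact hp.2
  | succ n ih =>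
    obtain ⟨hact, hcoc⟩ := hp
    obtain ⟨e, q, he, hs, rfl⟩ := S.decomp p (by omega)
    have hs' : S.src (S.act g e) = S.rng (S.act (S.coc g e) q) := by
      rw [S.src_act, S.rng_act, S.vact_coc, hs]
    obtain ⟨hfix_e, hfix_q⟩ := S.comp_inj _ _ e q hs' hs (S.len_act g e)
      (by rw [← S.act_comp g e q hs, hact])
    have hq : S.len q = n := by rw [S.len_comp e q hs, he] at hl; omega
    have hcoc_q : S.coc (S.coc g e) q = 1 := by rw [← S.coc_comp g e q hs, hcoc]
    exact hPF g e he hfix_e (ih ⟨hfix_q, hcoc_q⟩ hq)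

lemma PseudoFree.eq_diag_of_smul_diag (hPF : S.PseudoFree) {s : Option (P × G × P)} {γ : P}
    (hMs : S.Mem s) (hse : S.smul s (some (γ, (1 : G), γ)) = some (γ, (1 : G), γ)) :
    ∃ β, s = some (β, (1 : G), β) := by
  rcases s with _ | ⟨α, g, β⟩
  · cases hse
  have hMs : S.src α = S.vact g (S.src β) := hMs
  rcases S.smul_eq_some_cases hse with ⟨ε, hε, hγ, heq⟩ | ⟨ε, hε, hβ, heq⟩
  · obtain ⟨hcomp, hcoc, -⟩ := by simpa only [Prod.mk.injEq] using heq
    rw [mul_one] at hcoc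
    have hs : S.src α = S.rng (S.act g ε) := by rw [S.rng_act, ← hε, hMs]
    have hlen : S.len α = S.len β := by
      have := S.len_comp α (S.act g ε) hs
      rw [← hcomp, hγ, S.len_comp β ε hε, S.len_act] at this
      omega
    obtain ⟨rfl, hfix⟩ := S.comp_inj α _ β ε hs hε hlen (by rw [← hcomp, hγ])
    obtain rfl := hPF.eq_one_of_stronglyFixed ⟨hfix, hcoc.symm⟩
    exact ⟨α, rfl⟩
  · rw [inv_one, S.coc_one, inv_one, mul_one, S.act_one, ← hβ] at heq
    exact ⟨γ, by rw [heq]⟩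

end SSG

/-- `S_{G,E}` is `E*`-unitary (every element dominating a nonzero idempotent is itself
idempotent) if and only if `(G, E, φ)` is pseudo free. -/
theorem stmt10 {G V P : Type*} [Group G] (S : SSG G V P) :
    (∀ s e : Option (P × G × P), S.Mem s → S.Mem e → e ≠ none →
      S.smul e e = e → S.smul s e = e → S.smul s s = s) ↔ S.PseudoFree := by
  constructor
  · intro hU g e _ hfix hc
    have hv : S.vact g (S.rng e) = S.rng e := S.vact_eq_of_coc_eq_one hc _
    have hdom : S.smul (some (S.vert (S.rng e), g, S.vert (S.rng e))) (some (e, 1, e)) =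
        some (e, 1, e) := by
      rw [S.smul_vert_of_rng_eq hv rfl, hfix, hc, one_mul]
    have hidem := hU _ _ (S.mem_vert hv) (S.mem_diag e) (Option.some_ne_none _)
      (S.smul_diag e) hdom
    rw [S.smul_vert_of_rng_eq hv (S.rng_vert _), S.act_vert, hv, S.coc_vert] at hidem
    simp only [Option.some.injEq, Prod.mk.injEq] at hidem
    exact mul_eq_left.mp hidem.2.1
  · intro hPF s e hMs hMe hne hee hse
    obtain ⟨γ, rfl⟩ := S.eq_diag_of_smul_self hMe hne hee
    obtain ⟨β, rfl⟩ := hPF.eq_diag_of_smul_diag hMs hse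
    exact S.smul_diag β
end

section
/- Let (g, γ) be a G-circuit (γ a path of nonzero length with d(γ) = g·r(γ)). Define recursively γ¹ = γ, g₁ = g, γ^{n+1} = g_n·γ^n, g_{n+1} = φ(g_n, γ^n). Then d(γ^n) = r(γ^{n+1}) for all n ≥ 1, so the infinite concatenation ξ = γ¹γ²γ³⋯ is a well-defined infinite path, and moreover g·ξ = γ²γ³γ⁴⋯. -/
namespace SSG

variable {G V P : Type*} [Group G]

/-- An infinite path, encoded by its sequence of finite prefixes `ξ n = ξ|_n`:
the `n`-th prefix has length `n`, and each prefix extends the previous one by an edge. -/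
def IsInfPath (S : SSG G V P) (ξ : ℕ → P) : Prop :=
  (∀ n, S.len (ξ n) = n) ∧
  ∀ n, ∃ e, S.len e = 1 ∧ S.src (ξ n) = S.rng e ∧ ξ (n + 1) = S.comp (ξ n) e

/-- `Phi S g ξ n = φ(g, ξ|_n)`, the sequence of cocycle values along an infinite path
(0-indexed version of the map `Φ` of Definition 8.9). -/
def Phi (S : SSG G V P) (g : G) (ξ : ℕ → P) : ℕ → G := fun n => S.coc g (ξ n)

/-- The action of `G` on infinite paths, prefixwise: `(g·ξ)|_n = g·(ξ|_n)`. -/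
def actInf (S : SSG G V P) (g : G) (ξ : ℕ → P) : ℕ → P := fun n => S.act g (ξ n)

end SSG
namespace SSG

variable {G V P : Type*} [Group G]

/-- The recursive sequence `(γⁿ⁺¹, gₙ₊₁)` attached to a `G`-circuit `(g, γ)`:
`γ¹ = γ`, `g₁ = g`, `γⁿ⁺¹ = gₙ·γⁿ`, `gₙ₊₁ = φ(gₙ, γⁿ)` (0-indexed here). -/
def circSeq (S : SSG G V P) (g : G) (γ : P) : ℕ → P × G
  | 0 => (γ, g)
  | n + 1 =>
      (S.act (circSeq S g γ n).2 (circSeq S g γ n).1,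
       S.coc (circSeq S g γ n).2 (circSeq S g γ n).1)

/-- The partial concatenations `γ¹γ²⋯γⁿ` of the paths attached to a `G`-circuit,
i.e. the prefixes of the infinite path `ξ = γ¹γ²γ³⋯`. -/
def partConcat (S : SSG G V P) (g : G) (γ : P) : ℕ → P
  | 0 => S.vert (S.rng γ)
  | n + 1 => S.comp (partConcat S g γ n) (circSeq S g γ n).1

end SSG

/-!
Each `(gₙ, γⁿ)` is again a `G`-circuit, since `φ(g, α)` acts on vertices as `g` does; this gives
`d(γⁿ) = gₙ·r(γⁿ) = r(γⁿ⁺¹)`. By the cocycle identity `φ(g, γ¹⋯γⁿ) = gₙ₊₁`, so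
`g·(γ¹⋯γⁿγⁿ⁺¹) = (g·γ¹⋯γⁿ)(gₙ₊₁·γⁿ⁺¹)`, which is the induction step for `g·ξ = γ²γ³⋯`.
The infinite path `ξ` itself is assembled from the increasing chain `γ¹⋯γⁿ` by taking, for each
`k`, the length-`k` prefix of any partial concatenation of length at least `k`.
-/

namespace SSG

variable {G V P : Type*} [Group G] (S : SSG G V P)

def IsPref (α p : P) : Prop := ∃ β, S.src α = S.rng β ∧ p = S.comp α β

lemma isPref_refl (p : P) : S.IsPref p p :=
  ⟨S.vert (S.src p), (S.rng_vert _).symm, (S.comp_vert_right _).symm⟩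

lemma exists_isPref_len (p : P) {m : ℕ} (hm : m ≤ S.len p) :
    ∃ α, S.len α = m ∧ S.IsPref α p := by
  induction m with
  | zero => exact ⟨S.vert (S.rng p), S.len_vert _, p, S.src_vert _, (S.comp_vert_left p).symm⟩
  | succ m ih =>
    obtain ⟨α, hα, β, hαβ, rfl⟩ := ih (Nat.le_of_succ_le hm)
    have hβ : 1 ≤ S.len β := by rw [S.len_comp _ _ hαβ, hα] at hm; omega
    obtain ⟨e, q, he, heq, rfl⟩ := S.decomp β hβ
    have hαe : S.src α = S.rng e := by rw [hαβ, S.rng_comp _ _ heq]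
    refine ⟨S.comp α e, by rw [S.len_comp _ _ hαe, hα, he], q, ?_, ?_⟩
    · rw [S.src_comp _ _ hαe, heq]
    · rw [S.comp_assoc _ _ _ hαe heq]

variable {S}

lemma IsPref.trans {α p q : P} (hαp : S.IsPref α p) (hpq : S.IsPref p q) : S.IsPref α q := by
  obtain ⟨β, hαβ, rfl⟩ := hαp
  obtain ⟨δ, hpδ, rfl⟩ := hpq
  have hβδ : S.src β = S.rng δ := by rw [← hpδ, S.src_comp _ _ hαβ]
  exact ⟨S.comp β δ, by rw [S.rng_comp _ _ hβδ, hαβ], S.comp_assoc _ _ _ hαβ hβδ⟩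

lemma IsPref.eq_of_len_eq {α α' p : P} (h : S.IsPref α p) (h' : S.IsPref α' p)
    (hl : S.len α = S.len α') : α = α' := by
  obtain ⟨β, hαβ, hp⟩ := h
  obtain ⟨β', hαβ', hp'⟩ := h'
  exact (S.comp_inj α β α' β' hαβ hαβ' hl (hp ▸ hp')).1

lemma IsPref.isPref_of_len_le {α α' p : P} (h : S.IsPref α p) (h' : S.IsPref α' p)
    (hl : S.len α ≤ S.len α') : S.IsPref α α' := by
  obtain ⟨δ, hδ, hδα'⟩ := S.exists_isPref_len α' hl
  rwa [(hδα'.trans h').eq_of_len_eq h hδ] at hδα'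

lemma isPref_of_le {p : ℕ → P} (hstep : ∀ n, S.IsPref (p n) (p (n + 1))) {n m : ℕ}
    (hnm : n ≤ m) : S.IsPref (p n) (p m) := by
  induction m, hnm using Nat.le_induction with
  | base => exact S.isPref_refl _
  | succ m _ ih => exact ih.trans (hstep m)

variable (S)

lemma exists_isInfPath_of_isPref_succ (p : ℕ → P) (hstep : ∀ n, S.IsPref (p n) (p (n + 1)))
    (hlen : ∀ n, n ≤ S.len (p n)) :
    ∃ ξ : ℕ → P, S.IsInfPath ξ ∧ ∀ n, ξ (S.len (p n)) = p n := by
  choose ξ hξlen hξp using fun k => S.exists_isPref_len (p k) (hlen k)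
  have hξ_le : ∀ {k m}, k ≤ m → S.IsPref (ξ k) (p m) := fun h =>
    (hξp _).trans (isPref_of_le hstep h)
  refine ⟨ξ, ⟨hξlen, fun n => ?_⟩, fun n => ?_⟩
  · obtain ⟨e, hξe, he⟩ := (hξ_le n.le_succ).isPref_of_len_le (hξp (n + 1))
      (by rw [hξlen, hξlen]; exact n.le_succ)
    have hlen_e := congrArg S.len he
    rw [S.len_comp _ _ hξe, hξlen, hξlen] at hlen_e
    exact ⟨e, by omega, hξe, he⟩
  · exact (hξp _).eq_of_len_eq (isPref_of_le hstep (hlen n)) (hξlen _)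

variable {g : G} {γ : P}

lemma len_circSeq (n : ℕ) : S.len (S.circSeq g γ n).1 = S.len γ := by
  induction n with
  | zero => rfl
  | succ n ih => rw [circSeq, S.len_act, ih]

lemma circSeq_shift (n : ℕ) :
    S.circSeq (S.circSeq g γ 1).2 (S.circSeq g γ 1).1 n = S.circSeq g γ (n + 1) := by
  induction n with
  | zero => rfl
  | succ n ih => rw [circSeq, ih]; rfl

lemma src_circSeq (hcirc : S.src γ = S.vact g (S.rng γ)) (n : ℕ) :
    S.src (S.circSeq g γ n).1 = S.vact (S.circSeq g γ n).2 (S.rng (S.circSeq g γ n).1) := by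
  induction n with
  | zero => exact hcirc
  | succ n ih =>
    simp only [circSeq]
    rw [S.src_act, S.rng_act, ih, S.vact_coc]

lemma src_circSeq_eq_rng_succ (hcirc : S.src γ = S.vact g (S.rng γ)) (n : ℕ) :
    S.src (S.circSeq g γ n).1 = S.rng (S.circSeq g γ (n + 1)).1 := by
  rw [S.src_circSeq hcirc, circSeq, S.rng_act]

lemma src_partConcat (hcirc : S.src γ = S.vact g (S.rng γ)) (n : ℕ) :
    S.src (S.partConcat g γ n) = S.rng (S.circSeq g γ n).1 := by
  induction n with
  | zero => exact S.src_vert _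
  | succ n ih => rw [partConcat, S.src_comp _ _ ih, S.src_circSeq_eq_rng_succ hcirc]

lemma len_partConcat (hcirc : S.src γ = S.vact g (S.rng γ)) (n : ℕ) :
    S.len (S.partConcat g γ n) = n * S.len γ := by
  induction n with
  | zero => rw [partConcat, S.len_vert, zero_mul]
  | succ n ih =>
    rw [partConcat, S.len_comp _ _ (S.src_partConcat hcirc n), ih, S.len_circSeq, Nat.succ_mul]

lemma partConcat_isPref_succ (hcirc : S.src γ = S.vact g (S.rng γ)) (n : ℕ) :
    S.IsPref (S.partConcat g γ n) (S.partConcat g γ (n + 1)) :=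
  ⟨(S.circSeq g γ n).1, S.src_partConcat hcirc n, rfl⟩

lemma coc_partConcat (hcirc : S.src γ = S.vact g (S.rng γ)) (n : ℕ) :
    S.coc g (S.partConcat g γ n) = (S.circSeq g γ n).2 := by
  induction n with
  | zero => exact S.coc_vert _ _
  | succ n ih => rw [partConcat, S.coc_comp _ _ _ (S.src_partConcat hcirc n), ih]; rfl

lemma act_partConcat (hcirc : S.src γ = S.vact g (S.rng γ)) (n : ℕ) :
    S.act g (S.partConcat g γ n) = S.partConcat (S.circSeq g γ 1).2 (S.circSeq g γ 1).1 n := by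
  induction n with
  | zero => simp only [partConcat, circSeq, S.act_vert, S.rng_act]
  | succ n ih =>
    rw [partConcat, S.act_comp _ _ _ (S.src_partConcat hcirc n), ih, S.coc_partConcat hcirc,
      partConcat, S.circSeq_shift]
    rfl

end SSG

/-- Given a `G`-circuit `(g, γ)` (a path `γ` of nonzero length with `d(γ) = g·r(γ)`),
with the recursively defined sequences `γ¹ = γ`, `g₁ = g`, `γⁿ⁺¹ = gₙ·γⁿ`,
`gₙ₊₁ = φ(gₙ, γⁿ)`: one has `d(γⁿ) = r(γⁿ⁺¹)` for all `n`, the infinite concatenation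
`ξ = γ¹γ²γ³⋯` is a well-defined infinite path (whose prefix of length `n·|γ|` is
`γ¹⋯γⁿ`), and `g·ξ = γ²γ³γ⁴⋯`. -/
theorem stmt15 {G V P : Type*} [Group G] (S : SSG G V P) (g : G) (γ : P)
    (hlen : 1 ≤ S.len γ) (hcirc : S.src γ = S.vact g (S.rng γ)) :
    (∀ n, S.src (S.circSeq g γ n).1 = S.rng (S.circSeq g γ (n + 1)).1) ∧
    (∃ ξ : ℕ → P, S.IsInfPath ξ ∧ ∀ n, ξ (n * S.len γ) = S.partConcat g γ n) ∧
    (∀ n, S.act g (S.partConcat g γ n) =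
      S.partConcat (S.circSeq g γ 1).2 (S.circSeq g γ 1).1 n) := by
  refine ⟨S.src_circSeq_eq_rng_succ hcirc, ?_, S.act_partConcat hcirc⟩
  obtain ⟨ξ, hξ, hξ_prefix⟩ := S.exists_isInfPath_of_isPref_succ (S.partConcat g γ)
    (S.partConcat_isPref_succ hcirc)
    (fun n => by rw [S.len_partConcat hcirc]; exact Nat.le_mul_of_pos_right n hlen)
  exact ⟨ξ, hξ, fun n => by rw [← S.len_partConcat hcirc, hξ_prefix]⟩
end

section
/- Let E be a finite graph and suppose every circuit in E has an entry (for every circuit γ = γ₁⋯γ_n, some vertex d(γ_i) receives more than one edge). Then every G-circuit has an entry: for every pair (g, γ) with d(γ) = g·r(γ) and |γ| ≥ 1, the path γ has an entry. -/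
namespace SSG

variable {G V P : Type*} [Group G]

/-- A vertex `x` is simple if `r⁻¹(x)` is a singleton, i.e. there is at most one edge
with range `x`. -/
def SimpleVert (S : SSG G V P) (x : V) : Prop :=
  ∀ e e', S.len e = 1 → S.len e' = 1 → S.rng e = x → S.rng e' = x → e = e'

/-- A path `γ = γ₁⋯γ_n` has an entry if `d(γ_i)` is not simple for some `i`,
equivalently some prefix `δ` of `γ` of nonzero length has non-simple source. -/
def HasEntry (S : SSG G V P) (γ : P) : Prop :=
  ∃ δ ε, 1 ≤ S.len δ ∧ S.src δ = S.rng ε ∧ γ = S.comp δ ε ∧ ¬ S.SimpleVert (S.src δ)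

end SSG

/-!
If `(g, γ)` is a `G`-circuit, the vertex `r(γ)` has a finite orbit, so `gᵐ` fixes it for some
`m ≥ 1`. Then `γ (gγ) (g²γ) ⋯ (gᵐ⁻¹γ)` is an ordinary circuit, hence has an entry. An entry of
a concatenation lies in one of its factors, and the action transports entries, so `γ` has one.
-/

namespace SSG

variable {G V P : Type*} [Group G] (S : SSG G V P)

lemma act_injective (g : G) : Function.Injective (S.act g) := fun p q h => by
  simpa only [← S.act_mul, inv_mul_cancel, S.act_one] using congrArg (S.act g⁻¹) h

def vactHom : G →* Equiv.Perm V where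
  toFun g :=
    { toFun := S.vact g
      invFun := S.vact g⁻¹
      left_inv := fun x => by rw [← S.vact_mul, inv_mul_cancel, S.vact_one]
      right_inv := fun x => by rw [← S.vact_mul, mul_inv_cancel, S.vact_one] }
  map_one' := Equiv.ext S.vact_one
  map_mul' g h := Equiv.ext (S.vact_mul g h)

lemma finite_of_finite_len_zero (h : {p : P | S.len p = 0}.Finite) : Finite V :=
  have := h.to_subtype
  Finite.of_injective (fun x => (⟨S.vert x, S.len_vert x⟩ : {p : P | S.len p = 0}))
    fun x y hxy => by simpa only [S.src_vert] using congrArg (fun p => S.src p.1) hxy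

lemma exists_pow_vact_eq_self [Finite V] (g : G) :
    ∃ m, 0 < m ∧ ∀ x, S.vact (g ^ m) x = x := by
  obtain ⟨m, hm, hpow⟩ := (isOfFinOrder_of_finite (S.vactHom g)).exists_pow_eq_one
  refine ⟨m, hm, fun x => ?_⟩
  rw [← map_pow] at hpow
  exact congrArg (fun σ : Equiv.Perm V => σ x) hpow

lemma simpleVert_of_simpleVert_vact {g : G} {x : V} (h : S.SimpleVert (S.vact g x)) :
    S.SimpleVert x := by
  intro e e' he he' hr hr'
  refine S.act_injective g (h (S.act g e) (S.act g e') ?_ ?_ ?_ ?_) <;>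
    simp only [S.len_act, S.rng_act, he, he', hr, hr']

lemma exists_comp_of_le_len : ∀ (l : ℕ) (p : P), l ≤ S.len p →
    ∃ a b, S.len a = l ∧ S.src a = S.rng b ∧ p = S.comp a b
  | 0, p, _ => ⟨S.vert (S.rng p), p, S.len_vert _, S.src_vert _, (S.comp_vert_left p).symm⟩
  | l + 1, p, hl => by
    obtain ⟨e, q, he, heq, rfl⟩ := S.decomp p (by omega)
    rw [S.len_comp _ _ heq, he] at hl
    obtain ⟨a, b, rfl, hab, rfl⟩ := exists_comp_of_le_len l q (by omega)
    have hea : S.src e = S.rng a := by rw [heq, S.rng_comp _ _ hab]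
    refine ⟨S.comp e a, b, ?_, ?_, (S.comp_assoc _ _ _ hea hab).symm⟩
    · rw [S.len_comp _ _ hea, he, Nat.add_comm]
    · rwa [S.src_comp _ _ hea]

lemma exists_eq_comp_of_comp_eq_comp {α β δ ε : P} (hαβ : S.src α = S.rng β)
    (hδε : S.src δ = S.rng ε) (h : S.comp α β = S.comp δ ε) (hle : S.len δ ≤ S.len α) :
    ∃ b, S.src δ = S.rng b ∧ α = S.comp δ b ∧ ε = S.comp b β := by
  obtain ⟨a, b, hlen, hab, rfl⟩ := S.exists_comp_of_le_len _ α hle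
  have hbβ : S.src b = S.rng β := by rwa [S.src_comp _ _ hab] at hαβ
  rw [S.comp_assoc _ _ _ hab hbβ] at h
  obtain ⟨rfl, hε⟩ := S.comp_inj _ _ _ _ (by rwa [S.rng_comp _ _ hbβ]) hδε hlen h
  exact ⟨b, hab, rfl, hε.symm⟩

variable {S}

lemma HasEntry.act {γ : P} (h : S.HasEntry γ) (g : G) : S.HasEntry (S.act g γ) := by
  obtain ⟨δ, ε, hlen, hδε, rfl, hδ⟩ := h
  refine ⟨S.act g δ, S.act (S.coc g δ) ε, ?_, ?_, S.act_comp _ _ _ hδε, ?_⟩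
  · rwa [S.len_act]
  · rw [S.src_act, S.rng_act, S.vact_coc, hδε]
  · rw [S.src_act]
    exact fun hs => hδ (S.simpleVert_of_simpleVert_vact hs)

lemma HasEntry.of_act {g : G} {γ : P} (h : S.HasEntry (S.act g γ)) : S.HasEntry γ := by
  simpa only [← S.act_mul, inv_mul_cancel, S.act_one] using h.act g⁻¹

lemma HasEntry.or_of_comp {α β : P} (hαβ : S.src α = S.rng β)
    (h : S.HasEntry (S.comp α β)) : S.HasEntry α ∨ S.HasEntry β := by
  obtain ⟨δ, ε, hlen, hδε, hcomp, hδ⟩ := h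
  by_cases hle : S.len δ ≤ S.len α
  · obtain ⟨b, hδb, hα, -⟩ := S.exists_eq_comp_of_comp_eq_comp hαβ hδε hcomp hle
    exact Or.inl ⟨δ, b, hlen, hδb, hα, hδ⟩
  · obtain ⟨ρ, hαρ, rfl, hβ⟩ :=
      S.exists_eq_comp_of_comp_eq_comp hδε hαβ hcomp.symm (by omega)
    have hρε : S.src ρ = S.rng ε := by rwa [S.src_comp _ _ hαρ] at hδε
    rw [S.src_comp _ _ hαρ] at hδ
    rw [S.len_comp _ _ hαρ] at hle
    exact Or.inr ⟨ρ, ε, by omega, hρε, hβ, hδ⟩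

variable (S)

/-- `S.iterPath g γ n` is the concatenation `γ (gγ) ⋯ (gⁿ⁻¹γ)`. -/
def iterPath (g : G) (γ : P) : ℕ → P
  | 0 => S.vert (S.rng γ)
  | n + 1 => S.comp (iterPath g γ n) (S.act (g ^ n) γ)

section iterPath

variable {g : G} {γ : P}

lemma src_iterPath (hγ : S.src γ = S.vact g (S.rng γ)) (n : ℕ) :
    S.src (S.iterPath g γ n) = S.vact (g ^ n) (S.rng γ) := by
  induction n with
  | zero => rw [iterPath, S.src_vert, pow_zero, S.vact_one]
  | succ n ih =>
    rw [iterPath, S.src_comp _ _ (by rw [ih, S.rng_act]), S.src_act, hγ, ← S.vact_mul,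
      ← pow_succ]

lemma src_iterPath_eq_rng_act (hγ : S.src γ = S.vact g (S.rng γ)) (n : ℕ) :
    S.src (S.iterPath g γ n) = S.rng (S.act (g ^ n) γ) := by
  rw [S.src_iterPath hγ, S.rng_act]

lemma rng_iterPath (hγ : S.src γ = S.vact g (S.rng γ)) (n : ℕ) :
    S.rng (S.iterPath g γ n) = S.rng γ := by
  induction n with
  | zero => exact S.rng_vert _
  | succ n ih => rw [iterPath, S.rng_comp _ _ (S.src_iterPath_eq_rng_act hγ n), ih]

lemma len_iterPath (hγ : S.src γ = S.vact g (S.rng γ)) (n : ℕ) :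
    S.len (S.iterPath g γ n) = n * S.len γ := by
  induction n with
  | zero => rw [iterPath, S.len_vert, zero_mul]
  | succ n ih =>
    rw [iterPath, S.len_comp _ _ (S.src_iterPath_eq_rng_act hγ n), ih, S.len_act,
      Nat.succ_mul]

lemma HasEntry.of_iterPath (hγ : S.src γ = S.vact g (S.rng γ)) {n : ℕ}
    (h : S.HasEntry (S.iterPath g γ n)) : S.HasEntry γ := by
  induction n with
  | zero =>
    obtain ⟨δ, ε, hlen, hδε, hcomp, -⟩ := h
    have h0 := congrArg S.len hcomp
    rw [iterPath, S.len_vert, S.len_comp _ _ hδε] at h0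
    omega
  | succ n ih =>
    rw [iterPath] at h
    rcases h.or_of_comp (S.src_iterPath_eq_rng_act hγ n) with h | h
    · exact ih h
    · exact h.of_act

end iterPath

end SSG

theorem stmt16_general {G V P : Type*} [Group G] (S : SSG G V P)
    (hfin : ∀ n : ℕ, {p : P | S.len p = n}.Finite)
    (hcirc : ∀ γ : P, 1 ≤ S.len γ → S.src γ = S.rng γ → S.HasEntry γ) :
    ∀ (g : G) (γ : P), 1 ≤ S.len γ → S.src γ = S.vact g (S.rng γ) →
      S.HasEntry γ := by
  intro g γ hlen hγ
  have := S.finite_of_finite_len_zero (hfin 0)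
  obtain ⟨m, hm, hfix⟩ := S.exists_pow_vact_eq_self g
  refine SSG.HasEntry.of_iterPath S hγ (n := m) (hcirc _ ?_ ?_)
  · rw [S.len_iterPath hγ]
    exact Nat.mul_pos hm hlen
  · rw [S.src_iterPath hγ, S.rng_iterPath hγ, hfix]

/-- For a finite graph (finitely many paths of each length) with no sources, if every
(ordinary) circuit has an entry, then every `G`-circuit `(g, γ)` (with `|γ| ≥ 1` and
`d(γ) = g·r(γ)`) has an entry. -/
theorem stmt16 {G V P : Type*} [Group G] (S : SSG G V P)
    (hfin : ∀ n : ℕ, {p : P | S.len p = n}.Finite)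
    (hns : ∀ x : V, ∃ e, S.len e = 1 ∧ S.rng e = x)
    (hcirc : ∀ γ : P, 1 ≤ S.len γ → S.src γ = S.rng γ → S.HasEntry γ) :
    ∀ (g : G) (γ : P), 1 ≤ S.len γ → S.src γ = S.vact g (S.rng γ) →
      S.HasEntry γ :=
  stmt16_general S hfin hcirc
end

section
/- Let E be the graph determined by matrices A ∈ M_N(ℤ≥0), B ∈ M_N(ℤ) (with A_{ij} edges e_{i,j,n}, 0 ≤ n < A_{ij}, from vertex j to vertex i), and let ℤ act on edges by σ_m(e_{i,j,n}) = e_{i,j,n̂} where m·B_{ij} + n = k̂·A_{ij} + n̂ with 0 ≤ n̂ < A_{ij}, with cocycle φ(m, e_{i,j,n}) = k̂. Then a finite path α = e_{i₁,i₂,n₁}⋯e_{i_r,i_{r+1},n_r} is fixed by l ∈ ℤ (l·α = α) if and only if for every 1 ≤ j ≤ r, the rational number l·(B_{i₁i₂}⋯B_{i_j i_{j+1}})/(A_{i₁i₂}⋯A_{i_j i_{j+1}}) is an integer. -/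
/-- An edge `e_{i,j,n}` (with `0 ≤ n < A_{ij}`) of the graph of the matrix `A`,
going from vertex `j` to vertex `i`. -/
structure KEdge (N : ℕ) (A : Fin N → Fin N → ℤ) where
  i : Fin N
  j : Fin N
  n : ℤ
  hn0 : 0 ≤ n
  hnA : n < A i j

/-- The Katsura action of `m ∈ ℤ` on an edge: `m·e_{i,j,n} = e_{i,j,n̂}` where
`m·B_{ij} + n = k̂·A_{ij} + n̂` with `0 ≤ n̂ < A_{ij}` (Euclidean division). -/
def edgeAct {N : ℕ} (A B : Fin N → Fin N → ℤ) (m : ℤ) (e : KEdge N A) : KEdge N A :=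
  ⟨e.i, e.j, (m * B e.i e.j + e.n) % A e.i e.j,
    Int.emod_nonneg _ (ne_of_gt (lt_of_le_of_lt e.hn0 e.hnA)),
    Int.emod_lt_of_pos _ (lt_of_le_of_lt e.hn0 e.hnA)⟩

/-- The Katsura cocycle: `φ(m, e_{i,j,n}) = k̂`, the quotient of the Euclidean
division of `m·B_{ij} + n` by `A_{ij}`. -/
def edgeCoc {N : ℕ} (A B : Fin N → Fin N → ℤ) (m : ℤ) (e : KEdge N A) : ℤ :=
  (m * B e.i e.j + e.n) / A e.i e.j

/-- The induced action of `m ∈ ℤ` on finite paths (lists of edges), determined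
recursively by `m·(e·α') = (m·e)·(φ(m, e)·α')`. -/
def pathAct {N : ℕ} (A B : Fin N → Fin N → ℤ) : ℤ → List (KEdge N A) → List (KEdge N A)
  | _, [] => []
  | m, e :: l => edgeAct A B m e :: pathAct A B (edgeCoc A B m e) l

/-!
Fixing `e :: α` with `m` means fixing `e` with `m` and fixing `α` with the cocycle value
`φ(m, e)`. An edge is fixed exactly when `A_e ∣ m B_e`, and then `φ(m, e) = m B_e / A_e`
exactly, so induction along the path turns the conditions into the divisibilities
`A_{e₁}⋯A_{e_k} ∣ m B_{e₁}⋯B_{e_k}` of the prefixes.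
-/

lemma Int.mul_dvd_mul_mul_iff {a b c d m : ℤ} (ha : a ≠ 0) (h : a ∣ m * b) :
    a * c ∣ m * (b * d) ↔ c ∣ m * b / a * d := by
  rw [← mul_assoc, ← Int.mul_ediv_cancel' h, mul_assoc, Int.mul_ediv_cancel_left _ ha]
  exact mul_dvd_mul_iff_left ha

lemma List.forall_prefix_dvd_cons_iff {ι : Type*} (a b : ι → ℤ) (e : ι) (l : List ι) (m : ℤ)
    (ha : a e ≠ 0) :
    (∀ k : ℕ, 1 ≤ k → k ≤ (e :: l).length →
        (((e :: l).take k).map a).prod ∣ m * (((e :: l).take k).map b).prod) ↔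
      a e ∣ m * b e ∧ ∀ k : ℕ, 1 ≤ k → k ≤ l.length →
        ((l.take k).map a).prod ∣ m * b e / a e * ((l.take k).map b).prod := by
  constructor
  · intro h
    have hhead : a e ∣ m * b e := by simpa using h 1 le_rfl (by simp)
    refine ⟨hhead, fun k hk hkl => ?_⟩
    have hk1 := h (k + 1) (by omega) (by simpa using hkl)
    simp only [List.take_succ_cons, List.map_cons, List.prod_cons] at hk1
    exact (Int.mul_dvd_mul_mul_iff ha hhead).mp hk1
  · rintro ⟨hhead, htail⟩ (_ | _ | k) hk hkl
    · omega
    · simpa using hhead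
    · simp only [List.take_succ_cons, List.map_cons, List.prod_cons]
      exact (Int.mul_dvd_mul_mul_iff ha hhead).mpr (htail (k + 1) (by omega) (by simpa using hkl))

section Katsura

variable {N : ℕ} {A : Fin N → Fin N → ℤ}

lemma KEdge.A_pos (e : KEdge N A) : 0 < A e.i e.j :=
  e.hn0.trans_lt e.hnA

variable (B : Fin N → Fin N → ℤ)

lemma edgeAct_eq_self_iff (m : ℤ) (e : KEdge N A) :
    edgeAct A B m e = e ↔ A e.i e.j ∣ m * B e.i e.j := by
  obtain ⟨i, j, n, hn0, hnA⟩ := e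
  simp only [edgeAct, KEdge.mk.injEq, true_and]
  conv_lhs => rhs; rw [← Int.emod_eq_of_lt hn0 hnA]
  rw [Int.emod_eq_emod_iff_emod_sub_eq_zero, add_sub_cancel_right, Int.dvd_iff_emod_eq_zero]

lemma edgeCoc_of_dvd (m : ℤ) (e : KEdge N A) (h : A e.i e.j ∣ m * B e.i e.j) :
    edgeCoc A B m e = m * B e.i e.j / A e.i e.j := by
  obtain ⟨c, hc⟩ := h
  rw [edgeCoc, hc, add_comm, Int.add_mul_ediv_left _ _ e.A_pos.ne',
    Int.ediv_eq_zero_of_lt e.hn0 e.hnA, zero_add, Int.mul_ediv_cancel_left _ e.A_pos.ne']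

lemma pathAct_cons_eq_self_iff (m : ℤ) (e : KEdge N A) (l : List (KEdge N A)) :
    pathAct A B m (e :: l) = e :: l ↔
      A e.i e.j ∣ m * B e.i e.j ∧ pathAct A B (m * B e.i e.j / A e.i e.j) l = l := by
  rw [pathAct, List.cons.injEq, edgeAct_eq_self_iff]
  refine and_congr_right fun h => ?_
  rw [edgeCoc_of_dvd B m e h]

end Katsura

theorem stmt18_general {N : ℕ} (A B : Fin N → Fin N → ℤ)
    (l : List (KEdge N A)) (m : ℤ) :
    pathAct A B m l = l ↔
      ∀ k : ℕ, 1 ≤ k → k ≤ l.length →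
        ((l.take k).map (fun e => A e.i e.j)).prod ∣
          m * ((l.take k).map (fun e => B e.i e.j)).prod := by
  induction l generalizing m with
  | nil => simp only [pathAct, List.length_nil, true_iff]; omega
  | cons e l ih =>
    rw [pathAct_cons_eq_self_iff, ih,
      List.forall_prefix_dvd_cons_iff (fun e => A e.i e.j) _ e l m e.A_pos.ne']

/-- (Lemma 18.4)  In the Katsura setting, a finite path
`α = e_{i₁,i₂,n₁}⋯e_{i_r,i_{r+1},n_r}` is fixed by `l ∈ ℤ` if and only if for every
`1 ≤ j ≤ r` the rational number `l·(B_{i₁i₂}⋯B_{i_j i_{j+1}})/(A_{i₁i₂}⋯A_{i_j i_{j+1}})`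
is an integer, i.e. `A_{i₁i₂}⋯A_{i_j i_{j+1}}` divides `l·B_{i₁i₂}⋯B_{i_j i_{j+1}}`. -/
theorem stmt18 {N : ℕ} (A B : Fin N → Fin N → ℤ)
    (hA : ∀ i j, 0 ≤ A i j)
    (hArow : ∀ i, ∃ j, 1 ≤ A i j)
    (hB : ∀ i j, A i j = 0 → B i j = 0)
    (l : List (KEdge N A)) (hchain : l.Chain' (fun e f => e.j = f.i)) (m : ℤ) :
    pathAct A B m l = l ↔
      ∀ k : ℕ, 1 ≤ k → k ≤ l.length →
        ((l.take k).map (fun e => A e.i e.j)).prod ∣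
          m * ((l.take k).map (fun e => B e.i e.j)).prod :=
  stmt18_general A B l m
end
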